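/- For every integer n ≥ 1, the complete bipartite graph K_{2,n} satisfies ddn(K_{2,n}) = dn(K_{2,n}) = ⌈√(n/2)⌉. -/

import Mathlib

noncomputable section

/-- The Euclidean plane. -/
abbrev Plane : Type := EuclideanSpace ℝ (Fin 2)

/-- The set of edge-lengths determined by a map `f` of the vertices of `G` to the plane. -/
def SimpleGraph.edgeLengths {V : Type*} (G : SimpleGraph V) (f : V → Plane) : Set ℝ :=
  {d : ℝ | ∃ u v : V, G.Adj u v ∧ Dist.dist (f u) (f v) = d}

/-- A degenerate drawing of `G`: an injective map from the vertices to the plane. -/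
def SimpleGraph.IsDegenDrawing {V : Type*} (_G : SimpleGraph V) (f : V → Plane) : Prop :=
  Function.Injective f

/-- A drawing of `G`: a degenerate drawing such that no vertex lies on the open segment
representing an edge. -/
def SimpleGraph.IsDrawing {V : Type*} (G : SimpleGraph V) (f : V → Plane) : Prop :=
  Function.Injective f ∧ ∀ u v w : V, G.Adj u v → f w ∉ openSegment ℝ (f u) (f v)

/-- The degenerate distance-number of `G`: the minimum number of distinct edge-lengths
in a degenerate drawing of `G`. -/
def SimpleGraph.ddn {V : Type*} (G : SimpleGraph V) : ℕ :=
  sInf {k : ℕ | ∃ f : V → Plane, G.IsDegenDrawing f ∧ (G.edgeLengths f).ncard = k}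

/-- The distance-number of `G`: the minimum number of distinct edge-lengths
in a drawing of `G`. -/
def SimpleGraph.dn {V : Type*} (G : SimpleGraph V) : ℕ :=
  sInf {k : ℕ | ∃ f : V → Plane, G.IsDrawing f ∧ (G.edgeLengths f).ncard = k}

/-!
Lower bound: in a drawing with `k` edge-lengths the two vertices of the small side are distinct
points `A ≠ B`, and two circles about `A` and `B` meet in at most two points, so the large side
has at most `2 k²` vertices.

Upper bound: put `A = (0, 0)`, `B = (D, 0)` and take as the large side the `2 k²` intersection
points of the circles of squared radii `c + i`, `i < k`, about `A` and about `B`. Every such point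
has horizontal distance `u / (2D)` from a centre, with `u` a positive integer below `2D²`. If one
point lay strictly inside the edge from a centre to another, similar triangles would give
`u'² (c + i) = u² (c + i')` for their squared radii `c + i`, `c + i'`; for `c ≥ 4 D⁵` and `D > k`
this forces `i = i'`, which is absurd for two points at different distances from the centre.
-/

open Function

namespace SimpleGraph

variable {V W : Type*} {G : SimpleGraph V} {H : SimpleGraph W}

lemma IsDrawing.comp {f : W → Plane} (hf : H.IsDrawing f) (φ : G ↪g H) :
    G.IsDrawing (f ∘ φ) :=
  ⟨hf.1.comp φ.injective, fun _ _ _ huv => hf.2 _ _ _ (φ.map_adj_iff.2 huv)⟩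

lemma edgeLengths_comp_subset (f : W → Plane) (φ : G →g H) :
    G.edgeLengths (f ∘ φ) ⊆ H.edgeLengths f := by
  rintro _ ⟨u, v, huv, rfl⟩
  exact ⟨φ u, φ v, φ.map_adj huv, rfl⟩

variable (G) in
lemma edgeLengths_finite [Finite V] (f : V → Plane) : (G.edgeLengths f).Finite :=
  (Set.finite_range fun p : V × V => Dist.dist (f p.1) (f p.2)).subset <| by
    rintro _ ⟨u, v, -, rfl⟩
    exact ⟨(u, v), rfl⟩

lemma dn_le_ncard_edgeLengths {f : V → Plane} (hf : G.IsDrawing f) :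
    G.dn ≤ (G.edgeLengths f).ncard :=
  Nat.sInf_le ⟨f, hf, rfl⟩

lemma ddn_le_dn {f : V → Plane} (hf : G.IsDrawing f) : G.ddn ≤ G.dn := by
  obtain ⟨g, hg, hcard⟩ := Nat.sInf_mem
    (s := {k | ∃ f, G.IsDrawing f ∧ (G.edgeLengths f).ncard = k}) ⟨_, f, hf, rfl⟩
  exact Nat.sInf_le ⟨g, hg.1, hcard⟩

lemma le_ddn {m : ℕ} {f : V → Plane} (hf : G.IsDegenDrawing f)
    (h : ∀ g, G.IsDegenDrawing g → m ≤ (G.edgeLengths g).ncard) : m ≤ G.ddn :=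
  le_csInf ⟨_, f, hf, rfl⟩ (by rintro _ ⟨g, hg, rfl⟩; exact h g hg)

end SimpleGraph

def completeBipartiteGraphEmbedding {V₁ V₂ W₁ W₂ : Type*} (e : V₁ ↪ V₂) (e' : W₁ ↪ W₂) :
    completeBipartiteGraph V₁ W₁ ↪g completeBipartiteGraph V₂ W₂ where
  toEmbedding := e.sumMap e'
  map_rel_iff' := by rintro (a | a) (b | b) <;> simp

lemma card_filter_dist_eq_le_two {ι : Type*} (s : Finset ι) {p : ι → Plane} (hp : Injective p)
    {A B : Plane} (hAB : A ≠ B) (r : ℝ × ℝ) :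
    (s.filter fun v => (dist (p v) A, dist (p v) B) = r).card ≤ 2 := by
  by_contra! h
  obtain ⟨a, ha, b, hb, c, hc, hab, hac, hbc⟩ := Finset.two_lt_card.1 h
  simp only [Finset.mem_filter, Prod.ext_iff] at ha hb hc
  rcases EuclideanGeometry.eq_of_dist_eq_of_dist_eq_of_finrank_eq_two (finrank_euclideanSpace_fin)
    hAB (hp.ne hab) ha.2.1 hb.2.1 hc.2.1 ha.2.2 hb.2.2 hc.2.2 with h | h
  · exact hac (hp h).symm
  · exact hbc (hp h).symm

lemma card_le_two_mul_ncard_edgeLengths_sq {V : Type*} [Fintype V] {f : Fin 2 ⊕ V → Plane}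
    (hf : (completeBipartiteGraph (Fin 2) V).IsDegenDrawing f) :
    Fintype.card V ≤ 2 * ((completeBipartiteGraph (Fin 2) V).edgeLengths f).ncard ^ 2 := by
  classical
  have hS := (completeBipartiteGraph (Fin 2) V).edgeLengths_finite f
  have hmaps : ∀ v ∈ (Finset.univ : Finset V), (dist (f (.inr v)) (f (.inl 0)),
      dist (f (.inr v)) (f (.inl 1))) ∈ hS.toFinset ×ˢ hS.toFinset := fun v _ => by
    simp only [Finset.mem_product, Set.Finite.mem_toFinset]
    exact ⟨⟨_, _, by simp, rfl⟩, _, _, by simp, rfl⟩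
  have := Finset.card_le_mul_card_image_of_maps_to hmaps 2 fun r _ =>
    card_filter_dist_eq_le_two _ (hf.comp Sum.inr_injective) (hf.ne (by simp)) r
  rwa [Finset.card_product, ← Set.ncard_eq_toFinset_card _ hS, ← sq] at this

lemma Int.eq_of_mul_add_eq_mul_add {u u' c ℓ ℓ' : ℤ} (hu : 0 < u) (hu' : 0 ≤ u') (hℓ : 0 ≤ ℓ)
    (hℓ' : 0 ≤ ℓ') (hc : u * ℓ' < c) (hc' : u' * ℓ < c) (h : u' * (c + ℓ) = u * (c + ℓ')) :
    ℓ = ℓ' := by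
  have hc0 : 0 ≤ c := by nlinarith
  rcases lt_trichotomy u u' with hlt | rfl | hlt
  · nlinarith [mul_le_mul_of_nonneg_right (Int.add_one_le_of_lt hlt) (by omega : 0 ≤ c + ℓ)]
  · nlinarith
  · nlinarith [mul_le_mul_of_nonneg_right (Int.add_one_le_of_lt hlt) (by omega : 0 ≤ c + ℓ')]

lemma notMem_openSegment_of_apply_one_eq_zero {Q P w : Plane} (hQ : Q 1 = 0) (hw : w 1 = 0)
    (hP : P 1 ≠ 0) : w ∉ openSegment ℝ Q P := by
  rw [openSegment_eq_image']
  rintro ⟨t, ht, rfl⟩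
  simp [hQ, ht.1.ne', hP] at hw

/-- A point `w = Q + t (P - Q)` has `u' = t² u` and `c + ℓ' = t² (c + ℓ)`, hence
`u' (c + ℓ) = u (c + ℓ')`; by integrality this forces `ℓ = ℓ'`, i.e. `t = 1`. -/
lemma notMem_openSegment_of_sq_eq {Q P w : Plane} {r : ℝ} {u u' c ℓ ℓ' : ℤ}
    (hu : 0 < u) (hu' : 0 ≤ u') (hℓ : 0 ≤ ℓ) (hℓ' : 0 ≤ ℓ') (hc : u * ℓ' < c) (hc' : u' * ℓ < c)
    (hP : (P 0 - Q 0) ^ 2 * r = u) (hw : (w 0 - Q 0) ^ 2 * r = u')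
    (hPQ : dist P Q ^ 2 = c + ℓ) (hwQ : dist w Q ^ 2 = c + ℓ') :
    w ∉ openSegment ℝ Q P := by
  rw [openSegment_eq_image']
  rintro ⟨t, ⟨ht0, ht1⟩, rfl⟩
  have hdist : dist (Q + t • (P - Q)) Q = t * dist P Q := by
    rw [dist_self_add_left, norm_smul, Real.norm_of_nonneg ht0.le, dist_eq_norm]
  simp only [PiLp.add_apply, PiLp.smul_apply, PiLp.sub_apply, smul_eq_mul,
    add_sub_cancel_left] at hw
  rw [hdist] at hwQ
  have hreal : (u' : ℝ) * (c + ℓ) = u * (c + ℓ') := by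
    rw [← hP, ← hw, ← hPQ, ← hwQ]; ring
  have hℓℓ' := Int.eq_of_mul_add_eq_mul_add hu hu' hℓ hℓ' hc hc' (by exact_mod_cast hreal)
  have hpos : (0 : ℝ) < c + ℓ := by
    have : (0 : ℤ) < c + ℓ := by nlinarith
    exact_mod_cast this
  rw [← hℓℓ', ← hPQ] at hwQ
  nlinarith [mul_pos (hPQ ▸ hpos) (by nlinarith : 0 < 1 - t ^ 2)]

namespace K2Drawing

variable {k : ℕ} (D c : ℕ)

def center (x : Fin 2) : Plane := !₂[(D * x : ℕ), 0]

/-- `offset D l x / (2 * D)` is the horizontal distance of `point D c (l, b)` from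
`center D x`. -/
def offset (l : Fin 2 → Fin k) (x : Fin 2) : ℤ := (D : ℤ) ^ 2 + l x - l (1 - x)

def abscissa (l : Fin 2 → Fin k) : ℝ := offset D l 0 / (2 * D)

def ordinate (l : Fin 2 → Fin k) : ℝ := √(c + l 0 - abscissa D l ^ 2)

def point (p : (Fin 2 → Fin k) × Bool) : Plane :=
  !₂[abscissa D p.1, if p.2 then ordinate D c p.1 else -ordinate D c p.1]

variable (k) in
def drawing : Fin 2 ⊕ ((Fin 2 → Fin k) × Bool) → Plane := Sum.elim (center D) (point D c)

variable {D c}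

lemma offset_pos_lt (hD : k < D) (l : Fin 2 → Fin k) (x : Fin 2) :
    0 < offset D l x ∧ offset D l x < 2 * D ^ 2 := by
  have h1 : ((l x : ℕ) : ℤ) < D := by exact_mod_cast (l x).2.trans hD
  have h2 : ((l (1 - x) : ℕ) : ℤ) < D := by exact_mod_cast (l (1 - x)).2.trans hD
  unfold offset
  constructor <;> nlinarith [(l x : ℕ).cast_nonneg (α := ℤ), (l (1 - x) : ℕ).cast_nonneg (α := ℤ)]

lemma offset_sq_mul_lt (hD : k < D) (hc : 4 * D ^ 5 ≤ c) (l l' : Fin 2 → Fin k) (x : Fin 2) :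
    offset D l x ^ 2 * (l' x : ℕ) < c := by
  obtain ⟨h0, h1⟩ := offset_pos_lt hD l x
  have h2 : ((l' x : ℕ) : ℤ) < D := by exact_mod_cast (l' x).2.trans hD
  have hc' : 4 * (D : ℤ) ^ 5 ≤ c := by exact_mod_cast hc
  have h3 : offset D l x ^ 2 < 4 * D ^ 4 := by nlinarith
  nlinarith [(l' x : ℕ).cast_nonneg (α := ℤ)]

lemma sq_le_of_four_mul_pow_five_le (hD : k < D) (hc : 4 * D ^ 5 ≤ c) : D ^ 2 ≤ c := by
  have := Nat.pow_le_pow_right ((Nat.zero_le k).trans_lt hD) (show 2 ≤ 5 by norm_num)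
  omega

lemma abscissa_mul (hD : k < D) (l : Fin 2 → Fin k) :
    abscissa D l * (2 * D) = offset D l 0 := by
  have : (0 : ℝ) < D := by exact_mod_cast (Nat.zero_le k).trans_lt hD
  rw [abscissa, div_mul_cancel₀ _ (by positivity)]

lemma abscissa_sq_lt (hD : k < D) (hc : D ^ 2 ≤ c) (l : Fin 2 → Fin k) :
    abscissa D l ^ 2 < c + l 0 := by
  have hD0 : (0 : ℝ) < D := by exact_mod_cast (Nat.zero_le k).trans_lt hD
  have hc' : ((D ^ 2 : ℕ) : ℝ) ≤ c := by exact_mod_cast hc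
  obtain ⟨h0, h1⟩ := offset_pos_lt hD l 0
  have h0' : (0 : ℝ) < offset D l 0 := by exact_mod_cast h0
  have h1' : (offset D l 0 : ℝ) < 2 * D ^ 2 := by exact_mod_cast h1
  rw [← abscissa_mul hD l] at h0' h1'
  push_cast at hc'
  nlinarith [(l 0 : ℕ).cast_nonneg (α := ℝ)]

lemma ordinate_pos (hD : k < D) (hc : D ^ 2 ≤ c) (l : Fin 2 → Fin k) : 0 < ordinate D c l :=
  Real.sqrt_pos.2 (sub_pos.2 (abscissa_sq_lt hD hc l))

lemma ordinate_sq (hD : k < D) (hc : D ^ 2 ≤ c) (l : Fin 2 → Fin k) :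
    ordinate D c l ^ 2 = c + l 0 - abscissa D l ^ 2 :=
  Real.sq_sqrt (sub_nonneg.2 (abscissa_sq_lt hD hc l).le)

lemma dist_point_center_sq (hD : k < D) (hc : D ^ 2 ≤ c) (p : (Fin 2 → Fin k) × Bool)
    (x : Fin 2) : dist (point D c p) (center D x) ^ 2 = c + p.1 x := by
  obtain ⟨l, b⟩ := p
  have hx := abscissa_mul hD l
  have hy := ordinate_sq hD hc l
  rw [EuclideanSpace.dist_eq, Real.sq_sqrt (by positivity), Fin.sum_univ_two]
  fin_cases x <;> cases b
  all_goals simp [point, center, offset, hy, Real.dist_eq, sq_abs] at hx ⊢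
  all_goals linear_combination -hx

lemma sq_sub_center_mul (hD : k < D) (p : (Fin 2 → Fin k) × Bool) (x : Fin 2) :
    ((point D c p) 0 - (center D x) 0) ^ 2 * (2 * D) ^ 2 = (offset D p.1 x ^ 2 : ℤ) := by
  have hx := abscissa_mul hD p.1
  fin_cases x
  all_goals simp [point, center, offset] at hx ⊢
  · linear_combination (abscissa D p.1 * (2 * D) + (D : ℝ) ^ 2 + p.1 0 - p.1 1) * hx
  · linear_combination (abscissa D p.1 * (2 * D) - 3 * D ^ 2 + (p.1 0 : ℝ) - p.1 1) * hx

lemma point_apply_one_ne_zero (hD : k < D) (hc : D ^ 2 ≤ c) (p : (Fin 2 → Fin k) × Bool) :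
    point D c p 1 ≠ 0 := by
  have := ordinate_pos hD hc p.1
  unfold point
  split_ifs <;> simp [this.ne']

lemma point_injective (hD : k < D) (hc : D ^ 2 ≤ c) :
    Injective (point (k := k) D c) := by
  rintro ⟨l, b⟩ ⟨l', b'⟩ h
  have hl : l = l' := funext fun x => by
    have := congrArg (dist · (center D x) ^ 2) h
    simp only [dist_point_center_sq hD hc, add_right_inj, Nat.cast_inj] at this
    exact Fin.ext this
  subst hl
  have hy := congrArg (· 1) h
  have := ordinate_pos hD hc l
  cases b <;> cases b' <;> simp [point] at hy ⊢ <;> linarith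

lemma drawing_injective (hD : k < D) (hc : D ^ 2 ≤ c) : Injective (drawing k D c) := by
  have hD0 : 0 < D := (Nat.zero_le k).trans_lt hD
  rintro (x | p) (x' | p') h
  · simpa [drawing, center, hD0.ne', Fin.ext_iff] using h
  · simpa [drawing, center] using point_apply_one_ne_zero hD hc p' (congrArg (· 1) h).symm
  · simpa [drawing, center] using point_apply_one_ne_zero hD hc p (congrArg (· 1) h)
  · exact congrArg _ (point_injective hD hc h)

lemma notMem_openSegment_drawing (hD : k < D) (hc : 4 * D ^ 5 ≤ c) (x : Fin 2)
    (p : (Fin 2 → Fin k) × Bool) (w : Fin 2 ⊕ ((Fin 2 → Fin k) × Bool)) :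
    drawing k D c w ∉ openSegment ℝ (center D x) (point D c p) := by
  have hc' := sq_le_of_four_mul_pow_five_le hD hc
  rcases w with x' | p'
  · exact notMem_openSegment_of_apply_one_eq_zero (by simp [center]) (by simp [drawing, center])
      (point_apply_one_ne_zero hD hc' p)
  · exact notMem_openSegment_of_sq_eq (pow_pos (offset_pos_lt hD p.1 x).1 2) (sq_nonneg _)
      (Nat.cast_nonneg _) (Nat.cast_nonneg _) (offset_sq_mul_lt hD hc p.1 p'.1 x)
      (offset_sq_mul_lt hD hc p'.1 p.1 x) (sq_sub_center_mul hD p x) (sq_sub_center_mul hD p' x)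
      (by push_cast; exact dist_point_center_sq hD hc' p x)
      (by push_cast; exact dist_point_center_sq hD hc' p' x)

lemma isDrawing (hD : k < D) (hc : 4 * D ^ 5 ≤ c) :
    (completeBipartiteGraph (Fin 2) ((Fin 2 → Fin k) × Bool)).IsDrawing (drawing k D c) := by
  refine ⟨drawing_injective hD (sq_le_of_four_mul_pow_five_le hD hc), ?_⟩
  rintro (x | p) (x' | p') w hadj <;> simp at hadj
  · exact notMem_openSegment_drawing hD hc x p' w
  · rw [openSegment_symm]
    exact notMem_openSegment_drawing hD hc x' p w

lemma edgeLengths_subset (hD : k < D) (hc : D ^ 2 ≤ c) :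
    (completeBipartiteGraph (Fin 2) ((Fin 2 → Fin k) × Bool)).edgeLengths (drawing k D c) ⊆
      Set.range fun i : Fin k => √(c + i) := by
  have key (x : Fin 2) (p : (Fin 2 → Fin k) × Bool) :
      dist (point D c p) (center D x) = √(c + p.1 x) := by
    rw [← dist_point_center_sq hD hc, Real.sqrt_sq dist_nonneg]
  rintro _ ⟨(x | p), (x' | p'), hadj, rfl⟩ <;> simp at hadj
  · exact ⟨p'.1 x, by simp [drawing, dist_comm (center D x), key]⟩
  · exact ⟨p.1 x', by simp [drawing, key]⟩

lemma ncard_edgeLengths_le (hD : k < D) (hc : D ^ 2 ≤ c) :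
    ((completeBipartiteGraph (Fin 2) ((Fin 2 → Fin k) × Bool)).edgeLengths
      (drawing k D c)).ncard ≤ k := by
  refine (Set.ncard_le_ncard (edgeLengths_subset hD hc) (Set.finite_range _)).trans ?_
  rw [← Set.image_univ]
  exact (Set.ncard_image_le Set.finite_univ).trans (by simp)

end K2Drawing

lemma exists_isDrawing_ncard_edgeLengths_le (V : Type*) [Fintype V] {k : ℕ}
    (hV : Fintype.card V ≤ 2 * k ^ 2) :
    ∃ f, (completeBipartiteGraph (Fin 2) V).IsDrawing f ∧
      ((completeBipartiteGraph (Fin 2) V).edgeLengths f).ncard ≤ k := by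
  obtain ⟨e⟩ := Function.Embedding.nonempty_of_card_le (β := (Fin 2 → Fin k) × Bool)
    (by simpa [mul_comm] using hV)
  let φ := completeBipartiteGraphEmbedding (.refl (Fin 2)) e
  have hD := Nat.lt_succ_self k
  have hc := K2Drawing.sq_le_of_four_mul_pow_five_le hD le_rfl
  refine ⟨_, (K2Drawing.isDrawing hD le_rfl).comp φ, ?_⟩
  exact (Set.ncard_le_ncard (SimpleGraph.edgeLengths_comp_subset _ φ.toHom)
    ((completeBipartiteGraph _ _).edgeLengths_finite _)).trans
    (K2Drawing.ncard_edgeLengths_le hD hc)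

lemma ceil_sqrt_half_le_iff {n m : ℕ} : ⌈√((n : ℝ) / 2)⌉₊ ≤ m ↔ n ≤ 2 * m ^ 2 := by
  rw [Nat.ceil_le, Real.sqrt_le_left (Nat.cast_nonneg m), div_le_iff₀ two_pos, mul_comm]
  norm_cast

theorem stmt5_general (n : ℕ) :
    (completeBipartiteGraph (Fin 2) (Fin n)).ddn = ⌈Real.sqrt ((n : ℝ) / 2)⌉₊ ∧
    (completeBipartiteGraph (Fin 2) (Fin n)).dn = ⌈Real.sqrt ((n : ℝ) / 2)⌉₊ := by
  set k := ⌈Real.sqrt ((n : ℝ) / 2)⌉₊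
  obtain ⟨f, hf, hfk⟩ := exists_isDrawing_ncard_edgeLengths_le (Fin n) (k := k)
    (by rw [Fintype.card_fin]; exact ceil_sqrt_half_le_iff.1 le_rfl)
  have hlower : k ≤ (completeBipartiteGraph (Fin 2) (Fin n)).ddn :=
    SimpleGraph.le_ddn hf.1 fun g hg =>
      ceil_sqrt_half_le_iff.2 (by simpa using card_le_two_mul_ncard_edgeLengths_sq hg)
  have hupper := (SimpleGraph.dn_le_ncard_edgeLengths hf).trans hfk
  have := SimpleGraph.ddn_le_dn hf
  omega

/-- For `n ≥ 1`, `ddn (K_{2,n}) = dn (K_{2,n}) = ⌈√(n/2)⌉`. -/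
theorem stmt5 (n : ℕ) (hn : 1 ≤ n) :
    (completeBipartiteGraph (Fin 2) (Fin n)).ddn = ⌈Real.sqrt ((n : ℝ) / 2)⌉₊ ∧
    (completeBipartiteGraph (Fin 2) (Fin n)).dn = ⌈Real.sqrt ((n : ℝ) / 2)⌉₊ :=
  stmt5_general n
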